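/- arXiv:2510.13172 — 5 statements merged into one kernel-verified Lean document; each statement's English description precedes it below -/
import Mathlib

section
/- Let p be an odd prime. The set of pairs (m,k) of positive integers with m dividing p-1, (√p−1)² < km² < (√p+1)², and km² ≡ 1 (mod p) equals: {(1,1),(4,1),(7,1),(1,2)} (as (k,m) pairs with k the first entry) if p = 3; {(1+p,1)} if p ≡ 1 (mod 4); and {(1+p,1), ((1+p)/4, 2)} if p ≠ 3 and p ≡ 3 (mod 4). -/
/-!
Write `n = k m²` and `a = p + 1 - n`. The two real inequalities say exactly `a² < 4p`, and
`n ≡ 1 (mod p)` says `p ∣ a`. For `p ≥ 5` this forces `a = 0`, i.e. `k m² = p + 1`; since also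
`m ∣ p - 1`, `m` divides `2`, and `m = 2` is possible only when `4 ∣ p + 1`. For `p = 3` the
trace `a` may also be `±3`, giving `n ∈ {1, 4, 7}`.
-/

lemma sqrt_sub_one_sq_lt_and_lt_sqrt_add_one_sq_iff {x y : ℝ} (hx : 0 ≤ x) :
    (√x - 1) ^ 2 < y ∧ y < (√x + 1) ^ 2 ↔ (y - (x + 1)) ^ 2 < 4 * x := by
  have hsq : √x ^ 2 = x := Real.sq_sqrt hx
  have hfour : (2 * √x) ^ 2 = 4 * x := by rw [mul_pow, hsq]; norm_num
  rw [← hfour, sq_lt_sq, abs_of_nonneg (a := 2 * √x) (by positivity), abs_lt]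
  constructor <;> rintro ⟨h₁, h₂⟩ <;> constructor <;> nlinarith

lemma sqrt_sub_one_sq_lt_and_modEq_one_iff {p n : ℕ} :
    (√p - 1) ^ 2 < (n : ℝ) ∧ (n : ℝ) < (√p + 1) ^ 2 ∧ n ≡ 1 [MOD p] ↔
      ((n : ℤ) - (p + 1)) ^ 2 < 4 * p ∧ (p : ℤ) ∣ (n : ℤ) - (p + 1) := by
  rw [← and_assoc, sqrt_sub_one_sq_lt_and_lt_sqrt_add_one_sq_iff (Nat.cast_nonneg p),
    Nat.ModEq.comm, Nat.modEq_iff_dvd, ← dvd_sub_self_right, Nat.cast_one]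
  refine and_congr (by exact_mod_cast Iff.rfl) (by ring_nf)

lemma sqrt_sub_one_sq_lt_and_modEq_one_iff_of_four_le {p n : ℕ} (hp : 4 ≤ p) :
    (√p - 1) ^ 2 < (n : ℝ) ∧ (n : ℝ) < (√p + 1) ^ 2 ∧ n ≡ 1 [MOD p] ↔ n = p + 1 := by
  rw [sqrt_sub_one_sq_lt_and_modEq_one_iff]
  constructor
  · rintro ⟨hsq, hdvd⟩
    have hp' : (4 : ℤ) ≤ p := by exact_mod_cast hp
    have habs : |(n : ℤ) - (p + 1)| < p :=
      abs_lt_of_sq_lt_sq (by nlinarith) (by positivity)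
    have htrace := Int.eq_zero_of_abs_lt_dvd hdvd habs
    omega
  · rintro rfl
    push_cast
    rw [sub_self]
    exact ⟨by norm_num; omega, dvd_zero _⟩

lemma sqrt_sub_one_sq_lt_and_modEq_one_iff_three {n : ℕ} :
    (√3 - 1) ^ 2 < (n : ℝ) ∧ (n : ℝ) < (√3 + 1) ^ 2 ∧ n ≡ 1 [MOD 3] ↔
      n = 1 ∨ n = 4 ∨ n = 7 := by
  have h := @sqrt_sub_one_sq_lt_and_modEq_one_iff 3 n
  push_cast at h
  rw [h]
  constructor
  · rintro ⟨hsq, hdvd⟩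
    have hn : n ≤ 7 := by nlinarith
    interval_cases n <;> omega
  · rintro (rfl | rfl | rfl) <;> norm_num

lemma Nat.dvd_two_of_dvd_sub_one_of_dvd_add_one {m p : ℕ} (h₁ : m ∣ p - 1) (h₂ : m ∣ p + 1) :
    m ∣ 2 := by
  rcases p with _ | p
  · exact h₂.trans (one_dvd 2)
  · simpa [add_comm] using (Nat.dvd_add_right h₁).mp h₂

lemma pos_and_dvd_sub_one_and_mul_sq_eq_add_one_iff {p k m : ℕ} (hp : Odd p) :
    0 < k ∧ 0 < m ∧ m ∣ p - 1 ∧ k * m ^ 2 = p + 1 ↔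
      k = p + 1 ∧ m = 1 ∨ 4 * k = p + 1 ∧ m = 2 := by
  obtain ⟨r, rfl⟩ := hp
  constructor
  · rintro ⟨hk, hm, hdvd, heq⟩
    have hm2 : m ∣ 2 := Nat.dvd_two_of_dvd_sub_one_of_dvd_add_one hdvd
      ((dvd_pow_self m two_ne_zero).trans (Dvd.intro_left k heq))
    rcases (Nat.dvd_prime Nat.prime_two).mp hm2 with rfl | rfl <;> omega
  · rintro (⟨rfl, rfl⟩ | ⟨hk, rfl⟩)
    · simp
    · exact ⟨by omega, two_pos, ⟨r, by omega⟩, by omega⟩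

/-- Let `p` be an odd prime.  The set of pairs `(k, m)` of positive integers
with `m ∣ p - 1`, `(√p - 1)² < k·m² < (√p + 1)²` and `k·m² ≡ 1 (mod p)` equals
`{(1,1), (4,1), (7,1), (1,2)}` if `p = 3`; `{(1+p, 1)}` if `p ≡ 1 (mod 4)`; and
`{(1+p, 1), ((1+p)/4, 2)}` if `p ≠ 3` and `p ≡ 3 (mod 4)`. -/
theorem stmt_1 (p : ℕ) (hp : p.Prime) (hodd : Odd p) :
    {km : ℕ × ℕ | 0 < km.1 ∧ 0 < km.2 ∧ km.2 ∣ p - 1 ∧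
        (Real.sqrt p - 1) ^ 2 < ((km.1 * km.2 ^ 2 : ℕ) : ℝ) ∧
        ((km.1 * km.2 ^ 2 : ℕ) : ℝ) < (Real.sqrt p + 1) ^ 2 ∧
        km.1 * km.2 ^ 2 ≡ 1 [MOD p]} =
      if p = 3 then {(1, 1), (4, 1), (7, 1), (1, 2)}
      else if p % 4 = 1 then {(1 + p, 1)}
      else {(1 + p, 1), ((1 + p) / 4, 2)} := by
  have hp2 : p % 2 = 1 := Nat.odd_iff.mp hodd
  ext ⟨k, m⟩
  simp only [Set.mem_ofPred_eq]
  split_ifs with h3 h1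
  · subst h3
    rw [Nat.cast_ofNat, sqrt_sub_one_sq_lt_and_modEq_one_iff_three]
    simp only [Set.mem_insert_iff, Set.mem_singleton_iff, Prod.mk.injEq]
    constructor
    · rintro ⟨hk, hm, hdvd, hn⟩
      rcases (Nat.dvd_prime Nat.prime_two).mp hdvd with rfl | rfl <;> omega
    · rintro (⟨rfl, rfl⟩ | ⟨rfl, rfl⟩ | ⟨rfl, rfl⟩ | ⟨rfl, rfl⟩) <;> norm_num
  all_goals
    have hp4 : 4 ≤ p := by have := hp.two_le; omega
    rw [sqrt_sub_one_sq_lt_and_modEq_one_iff_of_four_le hp4,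
      pos_and_dvd_sub_one_and_mul_sq_eq_add_one_iff hodd]
    simp only [Set.mem_insert_iff, Set.mem_singleton_iff, Prod.mk.injEq]
    omega
end

section
/- Let p be an odd prime and let k, m be positive integers with m dividing p−1 and (√p−1)² < km² < (√p+1)². If p divides k, then m = 1, and k = p or k = 2p when p ≤ 5, while k = p when p > 5. -/
/-!
Write `k = p t`. Since `(√p + 1)² = p + 2√p + 1` is below `3p` for `p ≥ 2` and at most `2p` for
`p ≥ 6`, the bound `p · (t m²) < (√p + 1)²` forces `t m² ≤ 2`, hence `m = 1` and `t ∈ {1, 2}`,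
and forces `t m² = 1` once `p > 5`.
-/

namespace Real

lemma sq_sqrt_add_one_lt_three_mul {x : ℝ} (hx : 2 ≤ x) : (√x + 1) ^ 2 < 3 * x := by
  have hsq : √x ^ 2 = x := sq_sqrt (by linarith)
  have hs : √2 ≤ √x := sqrt_le_sqrt hx
  have h2 : (7 / 5 : ℝ) < √2 := lt_sqrt_of_sq_lt (by norm_num)
  nlinarith

lemma sq_sqrt_add_one_le_two_mul {x : ℝ} (hx : 6 ≤ x) : (√x + 1) ^ 2 ≤ 2 * x := by
  have hsq : √x ^ 2 = x := sq_sqrt (by linarith)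
  have hs : √6 ≤ √x := sqrt_le_sqrt hx
  have h6 : (12 / 5 : ℝ) < √6 := lt_sqrt_of_sq_lt (by norm_num)
  nlinarith

end Real

lemma Nat.lt_of_mul_lt_sq_sqrt_add_one {p q c : ℕ}
    (hc : (√(p : ℝ) + 1) ^ 2 ≤ c * p) (h : ((p * q : ℕ) : ℝ) < (√(p : ℝ) + 1) ^ 2) : q < c := by
  have : ((q * p : ℕ) : ℝ) < ((c * p : ℕ) : ℝ) := by push_cast at h ⊢; linarith
  exact Nat.lt_of_mul_lt_mul_right (Nat.cast_lt.mp this)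

theorem stmt_2_general (p k m : ℕ) (hp : p.Prime) (hk : 0 < k) (hm : 0 < m)
    (h2 : ((k * m ^ 2 : ℕ) : ℝ) < (Real.sqrt p + 1) ^ 2)
    (hpk : p ∣ k) :
    m = 1 ∧ (p ≤ 5 → k = p ∨ k = 2 * p) ∧ (5 < p → k = p) := by
  obtain ⟨t, rfl⟩ := hpk
  have ht : 0 < t := Nat.pos_of_mul_pos_left hk
  have hpR : (2 : ℝ) ≤ p := by exact_mod_cast hp.two_le
  rw [mul_assoc] at h2
  have hlt3 : t * m ^ 2 < 3 := Nat.lt_of_mul_lt_sq_sqrt_add_one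
    (by push_cast; exact (Real.sq_sqrt_add_one_lt_three_mul hpR).le) h2
  have hm1 : m = 1 := by
    by_contra hne
    have : 2 ^ 2 ≤ m ^ 2 := Nat.pow_le_pow_left (by omega) 2
    nlinarith
  subst hm1
  rw [one_pow, mul_one] at hlt3 h2
  refine ⟨rfl, fun _ => ?_, fun h5 => ?_⟩
  · interval_cases t <;> omega
  · have hp6 : (6 : ℝ) ≤ p := by exact_mod_cast h5
    have hlt2 : t < 2 := Nat.lt_of_mul_lt_sq_sqrt_add_one
      (by push_cast; exact Real.sq_sqrt_add_one_le_two_mul hp6) h2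
    rw [show t = 1 by omega, mul_one]

/-- Let `p` be an odd prime and `k, m` positive integers with `m ∣ p - 1` and
`(√p - 1)² < k·m² < (√p + 1)²`.  If `p ∣ k`, then `m = 1`, and `k = p` or `k = 2p` when
`p ≤ 5`, while `k = p` when `p > 5`. -/
theorem stmt_2 (p k m : ℕ) (hp : p.Prime) (hodd : Odd p) (hk : 0 < k) (hm : 0 < m)
    (hdvd : m ∣ p - 1)
    (h1 : (Real.sqrt p - 1) ^ 2 < ((k * m ^ 2 : ℕ) : ℝ))
    (h2 : ((k * m ^ 2 : ℕ) : ℝ) < (Real.sqrt p + 1) ^ 2)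
    (hpk : p ∣ k) :
    m = 1 ∧ (p ≤ 5 → k = p ∨ k = 2 * p) ∧ (5 < p → k = p) :=
  stmt_2_general p k m hp hk hm h2 hpk
end

section
/- Let p ≥ 3 be a prime, a an integer with |a| ≤ 2√p and a not divisible by p, and let β be the unit root in Z_p of T² − aT + p = 0 (which exists by Hensel's lemma since a is a unit mod p). Then v_p(β − 1) ≤ v_p(1 + p − a) ≤ 1, where v_p is the p-adic valuation. -/
/-- Let `p ≥ 3` be a prime, `a` an integer with `|a| ≤ 2√p` and `p ∤ a`, and
let `β` be the unit root in `ℤ_p` of `T² - aT + p = 0`.  Then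
`v_p(β - 1) ≤ v_p(1 + p - a) ≤ 1`, where `v_p` is the `p`-adic valuation normalized so that
`v_p(p) = 1`. -/
theorem stmt_3 (p : ℕ) [Fact p.Prime] (hp3 : 3 ≤ p) (a : ℤ)
    (ha : |(a : ℝ)| ≤ 2 * Real.sqrt p) (hpa : ¬ (p : ℤ) ∣ a)
    (β : ℤ_[p]) (hβ : β ^ 2 - (a : ℤ_[p]) * β + (p : ℤ_[p]) = 0) (hβu : IsUnit β) :
    (β - 1).valuation ≤ ((1 + (p : ℤ) - a : ℤ) : ℤ_[p]).valuation ∧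
      ((1 + (p : ℤ) - a : ℤ) : ℤ_[p]).valuation ≤ 1 := by
  set n : ℤ := 1 + (p : ℤ) - a with hn
  -- real estimates
  have hp0 : (0:ℝ) ≤ (p:ℝ) := by positivity
  have hs : Real.sqrt p ^ 2 = p := Real.sq_sqrt hp0
  have hs0 : (0:ℝ) ≤ Real.sqrt p := Real.sqrt_nonneg p
  have hpR : (3:ℝ) ≤ (p:ℝ) := by exact_mod_cast hp3
  have ha1 : (a : ℝ) ≤ 2 * Real.sqrt p := (abs_le.mp ha).2
  have ha2 : -(2 * Real.sqrt p) ≤ (a : ℝ) := (abs_le.mp ha).1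
  have hnpos : 0 < n := by
    have : (0:ℝ) < 1 + (p:ℝ) - a := by nlinarith [sq_nonneg (Real.sqrt p - 1)]
    have := this
    rw [hn]
    exact_mod_cast (by push_cast; linarith : (0:ℝ) < ((1 + (p:ℤ) - a : ℤ) : ℝ))
  have hnlt : n < (p:ℤ)^2 := by
    have : (1 + (p:ℝ) - a) < (p:ℝ)^2 := by
      nlinarith [sq_nonneg (Real.sqrt p - 1), sq_nonneg (Real.sqrt p ^ 2 - Real.sqrt p - 1)]
    rw [hn]
    exact_mod_cast (by push_cast; linarith : ((1 + (p:ℤ) - a : ℤ) : ℝ) < (p:ℝ)^2)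
  have hn0 : n ≠ 0 := hnpos.ne'
  have hncast : ((n : ℤ) : ℤ_[p]) ≠ 0 := by
    exact_mod_cast (Int.cast_injective (α := ℤ_[p])).ne_iff.mpr hn0
  -- factorization identity
  have hfact : (β - 1) * ((a : ℤ_[p]) - 1 - β) = ((n : ℤ) : ℤ_[p]) := by
    rw [hn]; push_cast; linear_combination -hβ
  have h1 : β - 1 ≠ 0 := by
    intro h
    rw [h, zero_mul] at hfact
    exact hncast hfact.symm
  have h2 : (a : ℤ_[p]) - 1 - β ≠ 0 := by
    intro h
    rw [h, mul_zero] at hfact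
    exact hncast hfact.symm
  constructor
  · -- v(β-1) ≤ v(n)
    have hval : ((n : ℤ) : ℤ_[p]).valuation
        = (β - 1).valuation + ((a : ℤ_[p]) - 1 - β).valuation := by
      rw [← hfact]
      exact PadicInt.valuation_mul h1 h2
    rw [hval]
    linarith [Nat.zero_le (((a : ℤ_[p]) - 1 - β).valuation)]
  · -- v(n) ≤ 1
    have hndvd : ¬ ((p:ℤ)^2 ∣ n) := by
      intro h
      have hppos : (0:ℤ) < (p:ℤ)^2 := by positivity
      have := Int.le_of_dvd hnpos h
      omega
    have hnorm : ¬ (‖((n : ℤ) : ℤ_[p])‖ ≤ (p:ℝ) ^ (-(2:ℕ) : ℤ)) := by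
      rw [PadicInt.norm_int_le_pow_iff_dvd]
      exact_mod_cast hndvd
    rw [PadicInt.norm_eq_zpow_neg_valuation hncast] at hnorm
    by_contra hle
    push_neg at hle
    have h2v : 2 ≤ ((n : ℤ) : ℤ_[p]).valuation := by omega
    apply hnorm
    have hp1 : (1:ℝ) ≤ (p:ℝ) := by linarith
    calc (p:ℝ) ^ (-(((n:ℤ):ℤ_[p]).valuation : ℤ)) ≤ (p:ℝ) ^ (-(2:ℤ)) :=
          zpow_le_zpow_right₀ hp1 (by omega)
      _ = (p:ℝ) ^ (-(2:ℕ) : ℤ) := by norm_num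
end

section
/- Let E be an elliptic curve over Q_2 with good supersingular reduction. Then E(Q_2)_tor is isomorphic to the trivial group, Z/3Z, or Z/5Z. -/
open WeierstrassCurve WeierstrassCurve.Affine

/-- An elliptic curve over `ℚ_p` with good reduction is given by an integral Weierstrass model
`W` over `ℤ_p` whose discriminant is a unit; its reduction `W̄` over `𝔽_p = ZMod p` is obtained
by reducing the coefficients modulo `p`. -/
noncomputable def WeierstrassCurve.reductionModP {p : ℕ} [Fact p.Prime]
    (W : WeierstrassCurve ℤ_[p]) : WeierstrassCurve (ZMod p) :=
  W.map PadicInt.toZMod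


namespace Stmt5

lemma dom2 {a b : ℚ_[2]} (h : ‖b‖ < ‖a‖) : ‖a + b‖ = ‖a‖ := by
  rw [Padic.add_eq_max_of_ne (ne_of_gt h)]
  exact max_eq_left h.le

lemma domsub {a b : ℚ_[2]} (h : ‖b‖ < ‖a‖) : ‖a - b‖ = ‖a‖ := by
  rw [sub_eq_add_neg, dom2]; rwa [norm_neg]

lemma nadd {C : ℝ} {a b : ℚ_[2]} (h1 : ‖a‖ ≤ C) (h2 : ‖b‖ ≤ C) : ‖a + b‖ ≤ C :=
  le_trans (Padic.nonarchimedean a b) (max_le h1 h2)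

lemma norm2 : ‖(2:ℚ_[2])‖ = 2⁻¹ := by
  have h : ((2:ℕ):ℚ_[2]) = (2:ℚ_[2]) := by norm_num
  have := Padic.norm_p (p:=2)
  rw [h] at this; rw [this]; norm_num

lemma norm3 : ‖(3:ℚ_[2])‖ = 1 := by
  have h3 : (3:ℚ_[2]) = 1 + 2 := by norm_num
  rw [h3, dom2 (by rw [norm2, norm_one]; norm_num), norm_one]

lemma norm4 : ‖(4:ℚ_[2])‖ = 4⁻¹ := by
  have h4 : (4:ℚ_[2]) = 2 * 2 := by norm_num
  rw [h4, norm_mul, norm2]; norm_num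

lemma pnorm_eq {x : ℚ_[2]} (hx : x ≠ 0) : ‖x‖ = (2:ℝ) ^ (-x.valuation) := by
  rw [Padic.norm_eq_zpow_neg_valuation hx]; norm_num

lemma discrete2 {x : ℚ_[2]} (h : 1 < ‖x‖) : 2 ≤ ‖x‖ := by
  have hx : x ≠ 0 := by intro h0; rw [h0] at h; norm_num at h
  rw [pnorm_eq hx] at h ⊢
  have h1 : (0:ℤ) < -x.valuation := by
    by_contra h2
    push_neg at h2
    have : (2:ℝ) ^ (-x.valuation) ≤ (2:ℝ)^(0:ℤ) := zpow_le_zpow_right₀ (by norm_num) h2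
    rw [zpow_zero] at this; linarith
  calc (2:ℝ) = (2:ℝ)^(1:ℤ) := by norm_num
    _ ≤ (2:ℝ) ^ (-x.valuation) := zpow_le_zpow_right₀ (by norm_num) h1

/-- Bundled hypotheses on the coefficients. -/
structure Hyp (a1 a2 a3 a4 a6 : ℚ_[2]) : Prop where
  h1 : ‖a1‖ ≤ 2⁻¹
  h2 : ‖a2‖ ≤ 1
  h3 : ‖a3‖ = 1
  h4 : ‖a4‖ ≤ 1
  h6 : ‖a6‖ ≤ 1

section Local

variable {a1 a2 a3 a4 a6 x y : ℚ_[2]}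

lemma y_integral (H : Hyp a1 a2 a3 a4 a6)
    (heq : y^2 + a1*x*y + a3*y = x^3 + a2*x^2 + a4*x + a6) (hx : ‖x‖ ≤ 1) : ‖y‖ ≤ 1 := by
  by_contra hy
  push_neg at hy
  have h0 : (0:ℝ) < ‖y‖ := lt_trans one_pos hy
  have hx0 : (0:ℝ) ≤ ‖x‖ := norm_nonneg x
  have hid : y^2 = (x^3 + a2*x^2 + a4*x + a6) + (-(a1*x*y)) + (-(a3*y)) := by
    linear_combination heq
  have hb : ‖y^2‖ ≤ ‖y‖ := by
    rw [hid]
    apply nadd (nadd _ _) _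
    · apply nadd (nadd (nadd _ _) _) _
      · rw [norm_pow]
        calc ‖x‖^3 ≤ 1 := pow_le_one₀ hx0 hx
          _ ≤ ‖y‖ := hy.le
      · rw [norm_mul, norm_pow]
        calc ‖a2‖ * ‖x‖^2 ≤ 1 * 1^2 := by gcongr; exact H.h2
          _ ≤ ‖y‖ := by simpa using hy.le
      · rw [norm_mul]
        calc ‖a4‖ * ‖x‖ ≤ 1 * 1 := by gcongr; exact H.h4
          _ ≤ ‖y‖ := by simpa using hy.le
      · exact le_trans H.h6 hy.le
    · rw [norm_neg, norm_mul, norm_mul]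
      calc ‖a1‖ * ‖x‖ * ‖y‖ ≤ 2⁻¹ * 1 * ‖y‖ := by gcongr; exact H.h1
        _ ≤ ‖y‖ := by nlinarith
    · rw [norm_neg, norm_mul, H.h3, one_mul]
  rw [norm_pow] at hb
  nlinarith

lemma norm_xy (H : Hyp a1 a2 a3 a4 a6)
    (heq : y^2 + a1*x*y + a3*y = x^3 + a2*x^2 + a4*x + a6) (hx : 1 < ‖x‖) :
    ‖x‖ < ‖y‖ ∧ ‖y‖^2 = ‖x‖^3 := by
  have hN0 : (0:ℝ) < ‖x‖ := lt_trans one_pos hx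
  have hM0 : (0:ℝ) ≤ ‖y‖ := norm_nonneg y
  have hx2lt : ‖x‖^2 < ‖x‖^3 := pow_lt_pow_right₀ hx (by norm_num)
  have hR : ‖x^3 + a2*x^2 + a4*x + a6‖ = ‖x‖^3 := by
    have t1 : ‖x^3 + a2*x^2‖ = ‖x‖^3 := by
      have e1 : ‖a2*x^2‖ < ‖x^3‖ := by
        rw [norm_mul, norm_pow, norm_pow]
        calc ‖a2‖ * ‖x‖^2 ≤ 1 * ‖x‖^2 := by gcongr; exact H.h2
          _ < ‖x‖^3 := by nlinarith
      rw [dom2 e1, norm_pow]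
    have t2 : ‖x^3 + a2*x^2 + a4*x‖ = ‖x‖^3 := by
      have e1 : ‖a4*x‖ < ‖x^3 + a2*x^2‖ := by
        rw [t1, norm_mul]
        calc ‖a4‖ * ‖x‖ ≤ 1 * ‖x‖ := by gcongr; exact H.h4
          _ < ‖x‖^3 := by nlinarith
      rw [dom2 e1, t1]
    have e1 : ‖a6‖ < ‖x^3 + a2*x^2 + a4*x‖ := by
      rw [t2]
      calc ‖a6‖ ≤ 1 := H.h6
        _ < ‖x‖^3 := by nlinarith
    rw [dom2 e1, t2]
  have hxy : ‖x‖ < ‖y‖ := by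
    by_contra hc
    push_neg at hc
    have hb : ‖y^2 + a1*x*y + a3*y‖ ≤ ‖x‖^2 := by
      apply nadd (nadd _ _) _
      · rw [norm_pow]; nlinarith
      · rw [norm_mul, norm_mul]
        calc ‖a1‖ * ‖x‖ * ‖y‖ ≤ 1 * ‖x‖ * ‖x‖ := by
              gcongr <;> first | exact le_trans H.h1 (by norm_num) | exact hc
          _ = ‖x‖^2 := by ring
      · rw [norm_mul, H.h3, one_mul]; nlinarith
    rw [heq, hR] at hb
    nlinarith
  have hy1 : 1 < ‖y‖ := lt_trans hx hxy
  have hL : ‖y^2 + a1*x*y + a3*y‖ = ‖y‖^2 := by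
    have t1 : ‖y^2 + a1*x*y‖ = ‖y‖^2 := by
      have e1 : ‖a1*x*y‖ < ‖y^2‖ := by
        rw [norm_mul, norm_mul, norm_pow]
        calc ‖a1‖ * ‖x‖ * ‖y‖ ≤ 1 * ‖x‖ * ‖y‖ := by
              gcongr; exact le_trans H.h1 (by norm_num)
          _ < ‖y‖^2 := by nlinarith
      rw [dom2 e1, norm_pow]
    have e1 : ‖a3*y‖ < ‖y^2 + a1*x*y‖ := by
      rw [t1, norm_mul, H.h3, one_mul]; nlinarith
    rw [dom2 e1, t1]
  exact ⟨hxy, by rw [← hL, heq, hR]⟩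

lemma norm_y_big (H : Hyp a1 a2 a3 a4 a6)
    (heq : y^2 + a1*x*y + a3*y = x^3 + a2*x^2 + a4*x + a6) (hx : 1 < ‖x‖) : 2 < ‖y‖ := by
  obtain ⟨h1, h2⟩ := norm_xy H heq hx
  have hN2 : 2 ≤ ‖x‖ := discrete2 hx
  have hM0 : (0:ℝ) ≤ ‖y‖ := norm_nonneg y
  nlinarith

lemma norm_den (H : Hyp a1 a2 a3 a4 a6)
    (heq : y^2 + a1*x*y + a3*y = x^3 + a2*x^2 + a4*x + a6) (hx : 1 < ‖x‖) :
    ‖2*y + a1*x + a3‖ = 2⁻¹ * ‖y‖ := by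
  obtain ⟨hxy, hsq⟩ := norm_xy H heq hx
  have hy2 : 2 < ‖y‖ := norm_y_big H heq hx
  have t1 : ‖2*y + a1*x‖ = 2⁻¹ * ‖y‖ := by
    have e1 : ‖a1*x‖ < ‖2*y‖ := by
      rw [norm_mul, norm_mul, norm2]
      calc ‖a1‖ * ‖x‖ ≤ 2⁻¹ * ‖x‖ := by gcongr; exact H.h1
        _ < 2⁻¹ * ‖y‖ := by nlinarith
    rw [dom2 e1, norm_mul, norm2]
  have e2 : ‖a3‖ < ‖2*y + a1*x‖ := by rw [t1, H.h3]; nlinarith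
  rw [dom2 e2, t1]

lemma den_ne (H : Hyp a1 a2 a3 a4 a6)
    (heq : y^2 + a1*x*y + a3*y = x^3 + a2*x^2 + a4*x + a6) (hx : 1 < ‖x‖) :
    2*y + a1*x + a3 ≠ 0 := by
  intro h0
  have h1 := norm_den H heq hx
  rw [h0, norm_zero] at h1
  have h2 := norm_y_big H heq hx
  nlinarith

lemma norm_numer (H : Hyp a1 a2 a3 a4 a6)
    (heq : y^2 + a1*x*y + a3*y = x^3 + a2*x^2 + a4*x + a6) (hx : 1 < ‖x‖) :
    ‖3*x^2 + 2*a2*x + a4 - a1*y‖ = ‖x‖^2 := by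
  have hN0 : (0:ℝ) < ‖x‖ := lt_trans one_pos hx
  obtain ⟨hxy, hsq⟩ := norm_xy H heq hx
  have hM0 : (0:ℝ) ≤ ‖y‖ := norm_nonneg y
  have e3x : ‖3*x^2‖ = ‖x‖^2 := by rw [norm_mul, norm3, one_mul, norm_pow]
  have t1 : ‖3*x^2 + 2*a2*x‖ = ‖x‖^2 := by
    have e1 : ‖2*a2*x‖ < ‖3*x^2‖ := by
      rw [e3x, norm_mul, norm_mul, norm2]
      calc 2⁻¹ * ‖a2‖ * ‖x‖ ≤ 2⁻¹ * 1 * ‖x‖ := by gcongr; exact H.h2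
        _ < ‖x‖^2 := by nlinarith
    rw [dom2 e1, e3x]
  have t2 : ‖3*x^2 + 2*a2*x + a4‖ = ‖x‖^2 := by
    have e1 : ‖a4‖ < ‖3*x^2 + 2*a2*x‖ := by
      rw [t1]
      calc ‖a4‖ ≤ 1 := H.h4
        _ < ‖x‖^2 := by nlinarith
    rw [dom2 e1, t1]
  have e1 : ‖a1*y‖ < ‖3*x^2 + 2*a2*x + a4‖ := by
    rw [t2, norm_mul]
    have h2 : ‖y‖ < 2 * ‖x‖^2 := by nlinarith
    calc ‖a1‖ * ‖y‖ ≤ 2⁻¹ * ‖y‖ := by gcongr; exact H.h1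
      _ < ‖x‖^2 := by nlinarith
  rw [domsub e1, t2]

lemma norm_double (H : Hyp a1 a2 a3 a4 a6)
    (heq : y^2 + a1*x*y + a3*y = x^3 + a2*x^2 + a4*x + a6) (hx : 1 < ‖x‖) :
    ‖((3*x^2 + 2*a2*x + a4 - a1*y)/(2*y + a1*x + a3))^2
      + a1*((3*x^2 + 2*a2*x + a4 - a1*y)/(2*y + a1*x + a3)) - a2 - x - x‖ = 4*‖x‖ := by
  set l : ℚ_[2] := (3*x^2 + 2*a2*x + a4 - a1*y)/(2*y + a1*x + a3) with hl_def
  have hN0 : (0:ℝ) < ‖x‖ := lt_trans one_pos hx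
  obtain ⟨hxy, hsq⟩ := norm_xy H heq hx
  have hy2 : 2 < ‖y‖ := norm_y_big H heq hx
  have hl : ‖l‖ = 2*‖x‖^2/‖y‖ := by
    rw [hl_def, norm_div, norm_numer H heq hx, norm_den H heq hx]
    field_simp
  have hl2 : ‖l‖^2 = 4*‖x‖ := by
    rw [hl, div_pow, div_eq_iff (by positivity)]
    nlinarith
  have hlbig : 2 < ‖l‖ := by nlinarith [norm_nonneg l]
  have t1 : ‖l^2 + a1*l‖ = 4*‖x‖ := by
    have e1 : ‖a1*l‖ < ‖l^2‖ := by
      rw [norm_mul, norm_pow]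
      calc ‖a1‖ * ‖l‖ ≤ 2⁻¹ * ‖l‖ := by gcongr; exact H.h1
        _ < ‖l‖^2 := by nlinarith
    rw [dom2 e1, norm_pow, hl2]
  have t2 : ‖l^2 + a1*l - a2‖ = 4*‖x‖ := by
    have e1 : ‖a2‖ < ‖l^2 + a1*l‖ := by
      rw [t1]
      calc ‖a2‖ ≤ 1 := H.h2
        _ < 4*‖x‖ := by nlinarith
    rw [domsub e1, t1]
  have t3 : ‖l^2 + a1*l - a2 - x‖ = 4*‖x‖ := by
    have e1 : ‖x‖ < ‖l^2 + a1*l - a2‖ := by rw [t2]; nlinarith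
    rw [domsub e1, t2]
  have e1 : ‖x‖ < ‖l^2 + a1*l - a2 - x‖ := by rw [t3]; nlinarith
  rw [domsub e1, t3]

lemma no_two_torsion (H : Hyp a1 a2 a3 a4 a6)
    (heq : y^2 + a1*x*y + a3*y = x^3 + a2*x^2 + a4*x + a6)
    (h0 : 2*y + a1*x + a3 = 0) : False := by
  by_cases hx : 1 < ‖x‖
  · exact den_ne H heq hx h0
  · push_neg at hx
    have hy : ‖y‖ ≤ 1 := y_integral H heq hx
    have hx0 : (0:ℝ) ≤ ‖x‖ := norm_nonneg x
    have hqd : a3^2 + 4*a6 = -(4*x^3) + (-((a1^2 + 4*a2)*x^2)) + (-((2*a1*a3 + 4*a4)*x)) := by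
      linear_combination (2*y + a1*x + a3)*h0 - 4*heq
    have hL : ‖a3^2 + 4*a6‖ = 1 := by
      have e1 : ‖4*a6‖ < ‖a3^2‖ := by
        rw [norm_mul, norm4, norm_pow, H.h3, one_pow]
        calc 4⁻¹ * ‖a6‖ ≤ 4⁻¹ * 1 := by gcongr; exact H.h6
          _ < 1 := by norm_num
      rw [dom2 e1, norm_pow, H.h3, one_pow]
    have hRle : ‖-(4*x^3) + (-((a1^2 + 4*a2)*x^2)) + (-((2*a1*a3 + 4*a4)*x))‖ ≤ 2⁻¹ := by
      apply nadd (nadd _ _) _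
      · rw [norm_neg, norm_mul, norm4, norm_pow]
        calc 4⁻¹ * ‖x‖^3 ≤ 4⁻¹ * 1^3 := by gcongr
          _ ≤ 2⁻¹ := by norm_num
      · rw [norm_neg, norm_mul, norm_pow]
        have hc : ‖a1^2 + 4*a2‖ ≤ 4⁻¹ := by
          apply nadd
          · rw [norm_pow]
            calc ‖a1‖^2 ≤ (2⁻¹:ℝ)^2 := by gcongr; exact H.h1
              _ ≤ 4⁻¹ := by norm_num
          · rw [norm_mul, norm4]
            calc 4⁻¹ * ‖a2‖ ≤ 4⁻¹ * 1 := by gcongr; exact H.h2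
              _ ≤ 4⁻¹ := by norm_num
        calc ‖a1^2 + 4*a2‖ * ‖x‖^2 ≤ 4⁻¹ * 1^2 := by gcongr
          _ ≤ 2⁻¹ := by norm_num
      · rw [norm_neg, norm_mul]
        have hc : ‖2*a1*a3 + 4*a4‖ ≤ 4⁻¹ := by
          apply nadd
          · rw [norm_mul, norm_mul, norm2, H.h3, mul_one]
            calc 2⁻¹ * ‖a1‖ ≤ 2⁻¹ * 2⁻¹ := by gcongr; exact H.h1
              _ ≤ 4⁻¹ := by norm_num
          · rw [norm_mul, norm4]
            calc 4⁻¹ * ‖a4‖ ≤ 4⁻¹ * 1 := by gcongr; exact H.h4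
              _ ≤ 4⁻¹ := by norm_num
        calc ‖2*a1*a3 + 4*a4‖ * ‖x‖ ≤ 4⁻¹ * 1 := by gcongr
          _ ≤ 2⁻¹ := by norm_num
    rw [← hqd, hL] at hRle
    norm_num at hRle

end Local

section L5
variable {a1 a2 a3 a4 a6 x1 y1 x2 y2 : ℚ_[2]}

/-- Two congruent points cannot be negatives of each other. -/
lemma same_x_neg_case (H : Hyp a1 a2 a3 a4 a6) (hx1 : ‖x1‖ ≤ 1) (hy2' : ‖y2‖ ≤ 1)
    (hcy : ‖y1 - y2‖ ≤ 2⁻¹) (hY : y1 = -y2 - a1*x1 - a3) : False := by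
  have hida : a3 = -(y1 - y2) + (-(2*y2)) + (-(a1*x1)) := by linear_combination hY
  have : ‖a3‖ ≤ 2⁻¹ := by
    rw [hida]
    apply nadd (nadd _ _) _
    · rwa [norm_neg]
    · rw [norm_neg, norm_mul, norm2]
      calc 2⁻¹ * ‖y2‖ ≤ 2⁻¹ * 1 := by gcongr
        _ = 2⁻¹ := by norm_num
    · rw [norm_neg, norm_mul]
      calc ‖a1‖ * ‖x1‖ ≤ 2⁻¹ * 1 := by gcongr; exact H.h1
        _ = 2⁻¹ := by norm_num
  rw [H.h3] at this; norm_num at this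

/-- Quadratic in `y`: two points with the same `x`. -/
lemma y_factor (heq1 : y1^2 + a1*x1*y1 + a3*y1 = x1^3 + a2*x1^2 + a4*x1 + a6)
    (heq2 : y2^2 + a1*x1*y2 + a3*y2 = x1^3 + a2*x1^2 + a4*x1 + a6) :
    (y1 - y2) * (y1 + y2 + a1*x1 + a3) = 0 := by linear_combination heq1 - heq2

/-- Secant-line computation: subtracting two distinct congruent integral points gives a
non-integral point. -/
lemma sub_nonintegral (H : Hyp a1 a2 a3 a4 a6)
    (hx1 : ‖x1‖ ≤ 1) (hy1 : ‖y1‖ ≤ 1) (hx2 : ‖x2‖ ≤ 1) (hy2 : ‖y2‖ ≤ 1)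
    (hne : x1 ≠ x2) (hcx : ‖x1 - x2‖ ≤ 2⁻¹) (hcy : ‖y1 - y2‖ ≤ 2⁻¹) :
    1 < ‖((y1 - (-y2 - a1*x2 - a3))/(x1 - x2))^2
      + a1*((y1 - (-y2 - a1*x2 - a3))/(x1 - x2)) - a2 - x1 - x2‖ := by
  set l : ℚ_[2] := (y1 - (-y2 - a1*x2 - a3))/(x1 - x2) with hl_def
  have hnum : ‖y1 - (-y2 - a1*x2 - a3)‖ = 1 := by
    have hrw : y1 - (-y2 - a1*x2 - a3) = a3 + ((y1 - y2) + 2*y2 + a1*x2) := by ring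
    have hsmall : ‖(y1 - y2) + 2*y2 + a1*x2‖ ≤ 2⁻¹ := by
      apply nadd (nadd _ _) _
      · exact hcy
      · rw [norm_mul, norm2]
        calc 2⁻¹ * ‖y2‖ ≤ 2⁻¹ * 1 := by gcongr
          _ = 2⁻¹ := by norm_num
      · rw [norm_mul]
        calc ‖a1‖ * ‖x2‖ ≤ 2⁻¹ * 1 := by gcongr; exact H.h1
          _ = 2⁻¹ := by norm_num
    rw [hrw, dom2 (by rw [H.h3]; linarith), H.h3]
  have hden0 : x1 - x2 ≠ 0 := sub_ne_zero.mpr hne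
  have hdenpos : (0:ℝ) < ‖x1 - x2‖ := norm_pos_iff.mpr hden0
  have hl : ‖l‖ = 1 / ‖x1 - x2‖ := by rw [hl_def, norm_div, hnum]
  have hl2 : 2 ≤ ‖l‖ := by
    rw [hl]
    rw [le_div_iff₀ hdenpos]
    linarith
  have hl0 : (0:ℝ) ≤ ‖l‖ := norm_nonneg l
  have t1 : ‖l^2 + a1*l‖ = ‖l‖^2 := by
    have e1 : ‖a1*l‖ < ‖l^2‖ := by
      rw [norm_mul, norm_pow]
      calc ‖a1‖ * ‖l‖ ≤ 2⁻¹ * ‖l‖ := by gcongr; exact H.h1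
        _ < ‖l‖^2 := by nlinarith
    rw [dom2 e1, norm_pow]
  have t2 : ‖l^2 + a1*l - a2‖ = ‖l‖^2 := by
    have e1 : ‖a2‖ < ‖l^2 + a1*l‖ := by
      rw [t1]
      calc ‖a2‖ ≤ 1 := H.h2
        _ < ‖l‖^2 := by nlinarith
    rw [domsub e1, t1]
  have t3 : ‖l^2 + a1*l - a2 - x1‖ = ‖l‖^2 := by
    have e1 : ‖x1‖ < ‖l^2 + a1*l - a2‖ := by
      rw [t2]
      calc ‖x1‖ ≤ 1 := hx1
        _ < ‖l‖^2 := by nlinarith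
    rw [domsub e1, t2]
  have e1 : ‖x2‖ < ‖l^2 + a1*l - a2 - x1‖ := by
    rw [t3]
    calc ‖x2‖ ≤ 1 := hx2
      _ < ‖l‖^2 := by nlinarith
  rw [domsub e1, t3]
  nlinarith

end L5

end Stmt5

/-! ### Glue with the Weierstrass curve API -/

open WeierstrassCurve WeierstrassCurve.Affine

namespace Stmt5

section Curve

variable {V : WeierstrassCurve.Affine ℚ_[2]}

open Classical

/-- The `x`-coordinate of a point (defined as `0` at infinity). -/
noncomputable def px : V.Point → ℚ_[2]
  | .zero => 0
  | @Point.some _ _ _ x _ _ => x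

/-- The `y`-coordinate of a point. -/
noncomputable def py : V.Point → ℚ_[2]
  | .zero => 0
  | @Point.some _ _ _ _ y _ => y

@[simp] lemma px_some {x y : ℚ_[2]} (h : V.Nonsingular x y) : px (Point.some _ _ h) = x := rfl
@[simp] lemma py_some {x y : ℚ_[2]} (h : V.Nonsingular x y) : py (Point.some _ _ h) = y := rfl

lemma heq_of_ns {x y : ℚ_[2]} (h : V.Nonsingular x y) :
    y^2 + V.a₁*x*y + V.a₃*y = x^3 + V.a₂*x^2 + V.a₄*x + V.a₆ :=
  (V.equation_iff x y).mp h.1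

lemma y_ne_negY (HV : Hyp V.a₁ V.a₂ V.a₃ V.a₄ V.a₆) {x y : ℚ_[2]} (h : V.Nonsingular x y) : y ≠ V.negY x y := by
  intro hc
  apply no_two_torsion HV (heq_of_ns h)
  rw [WeierstrassCurve.Affine.negY] at hc
  linear_combination hc

lemma double_norm (HV : Hyp V.a₁ V.a₂ V.a₃ V.a₄ V.a₆) {x y : ℚ_[2]} (h : V.Nonsingular x y) (hx : 1 < ‖x‖) :
    Point.some _ _ h + Point.some _ _ h ≠ 0 ∧ ‖px (Point.some _ _ h + Point.some _ _ h)‖ = 4 * ‖x‖ := by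
  have hy := y_ne_negY HV h
  rw [Point.add_self_of_Y_ne hy]
  refine ⟨Point.some_ne_zero _, ?_⟩
  rw [px_some]
  have hden : y - V.negY x y = 2*y + V.a₁*x + V.a₃ := by
    rw [WeierstrassCurve.Affine.negY]; ring
  have hslope : V.slope x x y y
      = (3*x^2 + 2*V.a₂*x + V.a₄ - V.a₁*y)/(2*y + V.a₁*x + V.a₃) := by
    rw [slope_of_Y_ne rfl hy, hden]
  rw [WeierstrassCurve.Affine.addX, hslope]
  exact norm_double HV (heq_of_ns h) hx

/-- Every point of finite order has integral `x`-coordinate. -/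
lemma torsion_x_integral (HV : Hyp V.a₁ V.a₂ V.a₃ V.a₄ V.a₆) {P : V.Point} (hP : IsOfFinAddOrder P) : ‖px P‖ ≤ 1 := by
  by_contra hc
  push_neg at hc
  -- all the doublings
  have key : ∀ k : ℕ, (2^k) • P ≠ 0 ∧ ‖px ((2^k) • P)‖ = 4^k * ‖px P‖ := by
    intro k
    induction k with
    | zero =>
      constructor
      · simp only [pow_zero, one_smul]
        intro h0; rw [h0] at hc; simp [px] at hc
        · norm_num at hc
      · simp
    | succ k ih =>
      obtain ⟨hne, hnorm⟩ := ih
      have hbig : 1 < ‖px ((2^k) • P)‖ := by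
        rw [hnorm]
        have : (1:ℝ) ≤ 4^k := one_le_pow₀ (by norm_num)
        nlinarith [norm_nonneg (px P)]
      obtain ⟨x, y, hxy, hrep⟩ : ∃ (x : ℚ_[2]) (y : ℚ_[2]) (h' : V.Nonsingular x y), (2^k) • P = Point.some _ _ h' := by
        cases h2 : (2^k) • P with
        | zero => exact absurd h2 hne
        | @some x y h' => exact ⟨x, y, h', rfl⟩
      have hstep : (2^(k+1)) • P = (2^k) • P + (2^k) • P := by
        rw [pow_succ, mul_comm, mul_smul, two_smul]
      rw [hrep, px_some] at hbig
      rw [hrep, px_some] at hnorm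
      obtain ⟨hne', hnorm'⟩ := double_norm HV hxy hbig
      constructor
      · rw [hstep, hrep]; exact hne'
      · rw [hstep, hrep, hnorm', pow_succ, hnorm]; ring
  -- pigeonhole on residues of 2^k mod the order of P
  set n := addOrderOf P with hn
  have hn0 : 0 < n := hP.addOrderOf_pos
  obtain ⟨k₁, hk₁, k₂, hk₂, hkne, hkeq⟩ :
      ∃ k₁ ∈ Finset.range (n+1), ∃ k₂ ∈ Finset.range (n+1), k₁ ≠ k₂ ∧ 2^k₁ % n = 2^k₂ % n := by
    obtain ⟨k₁, hk₁, k₂, hk₂, hne, he⟩ := Finset.exists_ne_map_eq_of_card_lt_of_maps_to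
      (s := Finset.range (n+1)) (t := Finset.range n) (by simp)
      (fun k _ => Finset.mem_range.mpr (Nat.mod_lt _ hn0) : ∀ k ∈ Finset.range (n+1),
        2^k % n ∈ Finset.range n)
    exact ⟨k₁, hk₁, k₂, hk₂, hne, he⟩
  wlog hlt : k₁ < k₂ generalizing k₁ k₂
  · exact this k₂ hk₂ k₁ hk₁ hkne.symm hkeq.symm (by omega)
  have hdvd : n ∣ 2^k₂ - 2^k₁ := by
    have hle : 2^k₁ ≤ 2^k₂ := Nat.pow_le_pow_right (by norm_num) hlt.le
    exact (Nat.modEq_iff_dvd' hle).mp hkeq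
  have hsmul : (2^k₂) • P = (2^k₁) • P := by
    have h1 : (2^k₂ - 2^k₁) • P = 0 := by
      rw [← hn] at *
      exact (addOrderOf_dvd_iff_nsmul_eq_zero).mp hdvd
    have hle : 2^k₁ ≤ 2^k₂ := Nat.pow_le_pow_right (by norm_num) hlt.le
    calc (2^k₂) • P = ((2^k₂ - 2^k₁) + 2^k₁) • P := by rw [Nat.sub_add_cancel hle]
      _ = (2^k₂ - 2^k₁) • P + (2^k₁) • P := by rw [add_nsmul]
      _ = (2^k₁) • P := by rw [h1, zero_add]
  have e₂ := (key k₂).2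
  rw [hsmul, (key k₁).2] at e₂
  have h4 : (4:ℝ)^k₁ = 4^k₂ := by
    have hp : (0:ℝ) < ‖px P‖ := lt_trans one_pos hc
    have := mul_right_cancel₀ (ne_of_gt hp) e₂
    linarith [this]
  have : k₁ = k₂ := by
    have := Nat.pow_right_injective (by norm_num : 2 ≤ 4)
      (by exact_mod_cast h4 : (4:ℕ)^k₁ = 4^k₂)
    omega
  omega

/-- Every point of finite order is integral. -/
lemma torsion_integral (HV : Hyp V.a₁ V.a₂ V.a₃ V.a₄ V.a₆) {x y : ℚ_[2]}
    (h : V.Nonsingular x y) (hP : IsOfFinAddOrder (Point.some _ _ h)) : ‖x‖ ≤ 1 ∧ ‖y‖ ≤ 1 := by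
  have hx := torsion_x_integral HV hP
  rw [px_some] at hx
  exact ⟨hx, y_integral HV (heq_of_ns h) hx⟩

/-- There is no 2-torsion. -/
lemma eq_zero_of_add_self_eq_zero (HV : Hyp V.a₁ V.a₂ V.a₃ V.a₄ V.a₆) {P : V.Point}
    (h2 : P + P = 0) : P = 0 := by
  cases P with
  | zero => rfl
  | @some x y h =>
    rw [Point.add_self_of_Y_ne (y_ne_negY HV h)] at h2
    exact absurd h2 (Point.some_ne_zero _)

/-- Reduction of a 2-adic number modulo 2 (defined to be `0` off the integers). -/
noncomputable def redc (z : ℚ_[2]) : ZMod 2 :=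
  if h : ‖z‖ ≤ 1 then PadicInt.toZMod (⟨z, h⟩ : ℤ_[2]) else 0

lemma redc_eq {z w : ℚ_[2]} (hz : ‖z‖ ≤ 1) (hw : ‖w‖ ≤ 1) (h : redc z = redc w) :
    ‖z - w‖ ≤ 2⁻¹ := by
  rw [redc, dif_pos hz, redc, dif_pos hw] at h
  set a : ℤ_[2] := ⟨z, hz⟩ with ha
  set b : ℤ_[2] := ⟨w, hw⟩ with hb
  have hk : a - b ∈ RingHom.ker (PadicInt.toZMod (p := 2)) := by
    rw [RingHom.mem_ker, map_sub, h, sub_self]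
  rw [PadicInt.ker_toZMod] at hk
  have hnu : ¬IsUnit (a - b) := hk
  have hlt : ‖a - b‖ < 1 :=
    lt_of_le_of_ne (PadicInt.norm_le_one _) (fun hc => hnu (PadicInt.isUnit_iff.mpr hc))
  obtain ⟨c, hc⟩ := (PadicInt.norm_lt_one_iff_dvd _).mp hlt
  have h2 : ((2:ℕ) : ℤ_[2]) = (2 : ℤ_[2]) := by norm_num
  have : ‖a - b‖ ≤ 2⁻¹ := by
    rw [hc, norm_mul]
    have h2n : ‖((2:ℕ) : ℤ_[2])‖ = 2⁻¹ := by rw [PadicInt.norm_p (p := 2)]; norm_num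
    rw [h2n]
    nlinarith [PadicInt.norm_le_one c, norm_nonneg c]
  calc ‖z - w‖ = ‖((a - b : ℤ_[2]) : ℚ_[2])‖ := by rw [PadicInt.coe_sub]
    _ = ‖a - b‖ := PadicInt.padic_norm_e_of_padicInt _
    _ ≤ 2⁻¹ := this

/-- The reduction map on points. -/
noncomputable def redP : V.Point → Option (ZMod 2 × ZMod 2)
  | .zero => none
  | @Point.some _ _ _ x y _ => Option.some (redc x, redc y)

lemma redP_inj (HV : Hyp V.a₁ V.a₂ V.a₃ V.a₄ V.a₆) {P Q : V.Point}
    (hP : IsOfFinAddOrder P) (hQ : IsOfFinAddOrder Q) (h : redP P = redP Q) : P = Q := by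
  cases P with
  | zero =>
    cases Q with
    | zero => rfl
    | @some x2 y2 h2 => exact absurd h (by simp [redP])
  | @some x1 y1 h1 =>
    cases Q with
    | zero => exact absurd h (by simp [redP])
    | @some x2 y2 h2 =>
      simp only [redP, Option.some.injEq, Prod.mk.injEq] at h
      obtain ⟨hrx, hry⟩ := h
      obtain ⟨hx1, hy1⟩ := torsion_integral HV h1 hP
      obtain ⟨hx2, hy2⟩ := torsion_integral HV h2 hQ
      have hcx := redc_eq hx1 hx2 hrx
      have hcy := redc_eq hy1 hy2 hry
      by_cases hx : x1 = x2
      · subst hx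
        rcases mul_eq_zero.mp (y_factor (a2 := V.a₂) (a4 := V.a₄) (a6 := V.a₆)
            (heq_of_ns h1) (heq_of_ns h2)) with h0 | h0
        · have : y1 = y2 := by linear_combination h0
          subst this
          rfl
        · exact absurd (same_x_neg_case HV hx1 hy2 hcy (by linear_combination h0)) id
      · -- x₁ ≠ x₂ : the difference is a non-integral torsion point
        exfalso
        have hsub : Point.some _ _ h1 - Point.some _ _ h2
            = Point.some _ _ ((nonsingular_add h1 ((nonsingular_neg ..).mpr h2)
                (fun hxx => absurd hxx.1 hx))) := by
          rw [sub_eq_add_neg, Point.neg_some]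
          exact Point.add_of_X_ne hx
        have hD : IsOfFinAddOrder (Point.some _ _ h1 - Point.some _ _ h2) := by
          rw [sub_eq_add_neg]
          exact hP.add hQ.neg
        have hint := torsion_x_integral HV hD
        rw [hsub, px_some] at hint
        have hxcoord : V.addX x1 x2 (V.slope x1 x2 y1 (V.negY x2 y2))
            = ((y1 - (-y2 - V.a₁*x2 - V.a₃))/(x1 - x2))^2
              + V.a₁*((y1 - (-y2 - V.a₁*x2 - V.a₃))/(x1 - x2)) - V.a₂ - x1 - x2 := by
          rw [slope_of_X_ne hx, WeierstrassCurve.Affine.addX, WeierstrassCurve.Affine.negY]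
        rw [hxcoord] at hint
        have := sub_nonintegral HV hx1 hy1 hx2 hy2 hx hcx hcy
        linarith

end Curve

/-! ### Group theory helpers -/

lemma equiv_zmod_one {G : Type*} [AddCommGroup G] (h : Nat.card G = 1) :
    Nonempty (G ≃+ ZMod 1) := by
  obtain ⟨hs, _⟩ := Nat.card_eq_one_iff_unique.mp h
  exact ⟨{ toFun := fun _ => 0, invFun := fun _ => 0,
           left_inv := fun a => Subsingleton.elim _ _,
           right_inv := fun a => Subsingleton.elim _ _,
           map_add' := fun a b => by simp }⟩

lemma equiv_zmod_prime {G : Type*} [AddCommGroup G] {p : ℕ} (hp : p.Prime)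
    (h : Nat.card G = p) : Nonempty (G ≃+ ZMod p) := by
  haveI : NeZero p := ⟨hp.ne_zero⟩
  haveI hGfin : Finite G := Nat.finite_of_card_ne_zero (by rw [h]; exact hp.ne_zero)
  haveI : Nontrivial G := Finite.one_lt_card_iff_nontrivial.mp (by rw [h]; exact hp.one_lt)
  obtain ⟨g, hg⟩ := exists_ne (0 : G)
  have hord : addOrderOf g = p := by
    rcases (Nat.Prime.eq_one_or_self_of_dvd hp _ (h ▸ addOrderOf_dvd_natCard g)) with h1 | h1
    · exact absurd (AddMonoid.addOrderOf_eq_one_iff.mp h1) hg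
    · exact h1
  have hfp : (zmultiplesHom G g) (p : ℤ) = 0 := by
    simp only [zmultiplesHom_apply]
    rw [natCast_zsmul, ← hord]
    exact addOrderOf_nsmul_eq_zero g
  set F : ZMod p →+ G := ZMod.lift p ⟨zmultiplesHom G g, hfp⟩ with hF
  have hinj : Function.Injective F := by
    rw [injective_iff_map_eq_zero]
    intro a ha
    have hval : a = ((a.val : ℤ) : ZMod p) := by simp [ZMod.intCast_cast, ZMod.natCast_val]
    rw [hval, ZMod.lift_coe] at ha
    simp only [zmultiplesHom_apply, natCast_zsmul] at ha
    have hdvd : p ∣ a.val := by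
      have := addOrderOf_dvd_iff_nsmul_eq_zero.mpr ha
      rwa [hord] at this
    have hlt : a.val < p := ZMod.val_lt a
    have h0 : a.val = 0 := Nat.eq_zero_of_dvd_of_lt hdvd hlt
    rw [hval, h0]
    simp
  have hcards : Nat.card (ZMod p) = Nat.card G := by rw [Nat.card_zmod, h]
  have hbij : Function.Bijective F :=
    (Nat.bijective_iff_injective_and_card (α := ZMod p) (β := G) ⇑F).mpr ⟨hinj, hcards⟩
  exact ⟨(AddEquiv.ofBijective F hbij).symm⟩


/-! ### Counting points over `𝔽₂` -/

/-- The decidable description of the point count over `ZMod 2`. -/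
lemma card_point_eq (c : WeierstrassCurve (ZMod 2)) :
    Nat.card c.toAffine.Point = 1 + Fintype.card {q : ZMod 2 × ZMod 2 //
      (q.2^2 + c.a₁*q.1*q.2 + c.a₃*q.2 = q.1^3 + c.a₂*q.1^2 + c.a₄*q.1 + c.a₆) ∧
      (c.a₁*q.2 ≠ 3*q.1^2 + 2*c.a₂*q.1 + c.a₄ ∨ q.2 ≠ -q.2 - c.a₁*q.1 - c.a₃)} := by
  have e1 : c.toAffine.Point ≃ Option {q : ZMod 2 × ZMod 2 //
      c.toAffine.Nonsingular q.1 q.2} :=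
    { toFun := fun P => match P with
        | .zero => none
        | @Point.some _ _ _ x y h => Option.some ⟨(x, y), h⟩
      invFun := fun o => match o with
        | none => .zero
        | Option.some ⟨(x, y), h⟩ => Point.some _ _ h
      left_inv := fun P => by cases P <;> rfl
      right_inv := fun o => by rcases o with _ | ⟨⟨x, y⟩, h⟩ <;> rfl }
  have e2 : {q : ZMod 2 × ZMod 2 // c.toAffine.Nonsingular q.1 q.2} ≃
      {q : ZMod 2 × ZMod 2 //
      (q.2^2 + c.a₁*q.1*q.2 + c.a₃*q.2 = q.1^3 + c.a₂*q.1^2 + c.a₄*q.1 + c.a₆) ∧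
      (c.a₁*q.2 ≠ 3*q.1^2 + 2*c.a₂*q.1 + c.a₄ ∨ q.2 ≠ -q.2 - c.a₁*q.1 - c.a₃)} :=
    Equiv.subtypeEquivRight (fun q => by
      rw [WeierstrassCurve.Affine.nonsingular_iff, WeierstrassCurve.Affine.equation_iff])
  rw [Nat.card_congr (e1.trans (Equiv.optionCongr e2)), Finite.card_option,
    Nat.card_eq_fintype_card, add_comm]

lemma card_even_helper : ∀ A1 A2 A3 A4 A6 : ZMod 2, A1 ≠ 0 →
    (⟨A1, A2, A3, A4, A6⟩ : WeierstrassCurve (ZMod 2)).Δ ≠ 0 →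
    (1 + Fintype.card {q : ZMod 2 × ZMod 2 //
      (q.2^2 + A1*q.1*q.2 + A3*q.2 = q.1^3 + A2*q.1^2 + A4*q.1 + A6) ∧
      (A1*q.2 ≠ 3*q.1^2 + 2*A2*q.1 + A4 ∨ q.2 ≠ -q.2 - A1*q.1 - A3)}) % 2 = 0 := by decide

lemma a1_eq_zero_of_odd_card (c : WeierstrassCurve (ZMod 2)) (hd : c.Δ ≠ 0)
    (hodd : Nat.card c.toAffine.Point % 2 = 1) : c.a₁ = 0 := by
  by_contra h1
  rw [card_point_eq] at hodd
  have := card_even_helper c.a₁ c.a₂ c.a₃ c.a₄ c.a₆ h1 hd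
  omega

lemma delta_helper : ∀ A2 A4 A6 : ZMod 2,
    (⟨0, A2, 0, A4, A6⟩ : WeierstrassCurve (ZMod 2)).Δ = 0 := by decide

/-! ### Coefficient facts -/

lemma norm_coe_le_one (a : ℤ_[2]) : ‖(a : ℚ_[2])‖ ≤ 1 := by
  rw [PadicInt.padic_norm_e_of_padicInt]; exact PadicInt.norm_le_one a

lemma norm_coe_le_half {a : ℤ_[2]} (h : PadicInt.toZMod a = 0) : ‖(a : ℚ_[2])‖ ≤ 2⁻¹ := by
  have hk : a ∈ RingHom.ker (PadicInt.toZMod (p := 2)) := h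
  rw [PadicInt.ker_toZMod] at hk
  have hnu : ¬IsUnit a := hk
  have hlt : ‖a‖ < 1 :=
    lt_of_le_of_ne (PadicInt.norm_le_one _) (fun hc => hnu (PadicInt.isUnit_iff.mpr hc))
  obtain ⟨c, hc⟩ := (PadicInt.norm_lt_one_iff_dvd _).mp hlt
  rw [PadicInt.padic_norm_e_of_padicInt, hc, norm_mul]
  have h2n : ‖((2:ℕ) : ℤ_[2])‖ = 2⁻¹ := by rw [PadicInt.norm_p (p := 2)]; norm_num
  rw [h2n]
  nlinarith [PadicInt.norm_le_one c, norm_nonneg c]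

lemma norm_coe_eq_one {a : ℤ_[2]} (h : PadicInt.toZMod a ≠ 0) : ‖(a : ℚ_[2])‖ = 1 := by
  rw [PadicInt.padic_norm_e_of_padicInt]
  rcases lt_or_eq_of_le (PadicInt.norm_le_one a) with hlt | he
  · exfalso
    obtain ⟨c, hc⟩ := (PadicInt.norm_lt_one_iff_dvd _).mp hlt
    apply h
    rw [hc, map_mul, map_natCast]
    have : ((2:ℕ) : ZMod 2) = 0 := by decide
    rw [this, zero_mul]
  · exact he

/-- Construct the analytic hypotheses from the reduction data. -/
lemma hyp_of (W : WeierstrassCurve ℤ_[2]) (h1 : PadicInt.toZMod W.a₁ = 0)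
    (h3 : PadicInt.toZMod W.a₃ ≠ 0) :
    Hyp (W.baseChange ℚ_[2]).a₁ (W.baseChange ℚ_[2]).a₂ (W.baseChange ℚ_[2]).a₃
      (W.baseChange ℚ_[2]).a₄ (W.baseChange ℚ_[2]).a₆ := by
  have e1 : (W.baseChange ℚ_[2]).a₁ = (W.a₁ : ℚ_[2]) := by
    simp [WeierstrassCurve.baseChange, PadicInt.algebraMap_apply]
  have e2 : (W.baseChange ℚ_[2]).a₂ = (W.a₂ : ℚ_[2]) := by
    simp [WeierstrassCurve.baseChange, PadicInt.algebraMap_apply]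
  have e3 : (W.baseChange ℚ_[2]).a₃ = (W.a₃ : ℚ_[2]) := by
    simp [WeierstrassCurve.baseChange, PadicInt.algebraMap_apply]
  have e4 : (W.baseChange ℚ_[2]).a₄ = (W.a₄ : ℚ_[2]) := by
    simp [WeierstrassCurve.baseChange, PadicInt.algebraMap_apply]
  have e6 : (W.baseChange ℚ_[2]).a₆ = (W.a₆ : ℚ_[2]) := by
    simp [WeierstrassCurve.baseChange, PadicInt.algebraMap_apply]
  exact ⟨e1 ▸ norm_coe_le_half h1, e2 ▸ norm_coe_le_one _, e3 ▸ norm_coe_eq_one h3,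
    e4 ▸ norm_coe_le_one _, e6 ▸ norm_coe_le_one _⟩

end Stmt5

open Classical in
open Stmt5 in
/-- Let `E` be an elliptic curve over `ℚ_2` with good supersingular reduction
(equivalently, `#Ē(𝔽_2)` is odd, i.e. `a_2(E) ≡ 0 mod 2`).  Then the torsion subgroup of
`E(ℚ_2)` is isomorphic to the trivial group, `ℤ/3ℤ`, or `ℤ/5ℤ`. -/
theorem stmt_5 (W : WeierstrassCurve ℤ_[2]) (hΔ : IsUnit W.Δ)
    (hss : Nat.card W.reductionModP.toAffine.Point % 2 = 1) :
    Nonempty ((AddCommGroup.torsion (W.baseChange ℚ_[2]).toAffine.Point) ≃+ ZMod 1) ∨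
    Nonempty ((AddCommGroup.torsion (W.baseChange ℚ_[2]).toAffine.Point) ≃+ ZMod 3) ∨
    Nonempty ((AddCommGroup.torsion (W.baseChange ℚ_[2]).toAffine.Point) ≃+ ZMod 5) := by
  classical
  have hredΔ : W.reductionModP.Δ ≠ 0 := by
    have h := isUnit_iff_ne_zero.mp (hΔ.map (PadicInt.toZMod (p := 2)))
    simpa [WeierstrassCurve.reductionModP, WeierstrassCurve.map_Δ] using h
  have ha1 : PadicInt.toZMod W.a₁ = 0 := by
    have := a1_eq_zero_of_odd_card W.reductionModP hredΔ hss
    simpa [WeierstrassCurve.reductionModP] using this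
  have ha3 : PadicInt.toZMod W.a₃ ≠ 0 := by
    intro h3
    have hmap : W.map (PadicInt.toZMod (p := 2)) =
        (⟨0, PadicInt.toZMod W.a₂, 0, PadicInt.toZMod W.a₄, PadicInt.toZMod W.a₆⟩ :
          WeierstrassCurve (ZMod 2)) := by
      rw [show W.map (PadicInt.toZMod (p := 2)) = ⟨PadicInt.toZMod W.a₁, PadicInt.toZMod W.a₂,
        PadicInt.toZMod W.a₃, PadicInt.toZMod W.a₄, PadicInt.toZMod W.a₆⟩ from rfl, ha1, h3]
    have h0 : PadicInt.toZMod W.Δ = 0 := by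
      rw [← WeierstrassCurve.map_Δ, hmap]
      exact delta_helper _ _ _
    exact (isUnit_iff_ne_zero.mp (hΔ.map _)) h0
  have HV := hyp_of W ha1 ha3
  set T := AddCommGroup.torsion (W.baseChange ℚ_[2]).toAffine.Point with hT
  have hmem : ∀ t : T, IsOfFinAddOrder (t : (W.baseChange ℚ_[2]).toAffine.Point) := fun t => t.2
  have hinj : Function.Injective
      (fun t : T => redP (V := (W.baseChange ℚ_[2]).toAffine) (t : (W.baseChange ℚ_[2]).toAffine.Point)) := by
    intro t1 t2 h
    exact Subtype.ext (redP_inj HV (hmem t1) (hmem t2) h)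
  haveI hfin : Finite T := Finite.of_injective _ hinj
  have hcard5 : Nat.card T ≤ 5 := by
    have h5 : Nat.card (Option (ZMod 2 × ZMod 2)) = 5 := by
      simp [Finite.card_option, Nat.card_eq_fintype_card]
    calc Nat.card T ≤ Nat.card (Option (ZMod 2 × ZMod 2)) :=
          Nat.card_le_card_of_injective _ hinj
      _ = 5 := h5
  haveI hne : Nonempty T := ⟨0⟩
  have hpos : 0 < Nat.card T := Nat.card_pos
  have hodd : ¬ 2 ∣ Nat.card T := by
    intro hdvd
    haveI : Fintype T := Fintype.ofFinite T
    rw [Nat.card_eq_fintype_card] at hdvd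
    obtain ⟨g, hg⟩ := exists_prime_addOrderOf_dvd_card 2 hdvd
    have h2 : g + g = 0 := by
      have h := addOrderOf_nsmul_eq_zero g
      rw [hg, two_nsmul] at h
      exact h
    have hval : (g : (W.baseChange ℚ_[2]).toAffine.Point) + (g : (W.baseChange ℚ_[2]).toAffine.Point) = 0 := by
      have := congrArg (Subtype.val) h2
      simpa using this
    have h0 : (g : (W.baseChange ℚ_[2]).toAffine.Point) = 0 := eq_zero_of_add_self_eq_zero HV hval
    have hg0 : g = 0 := Subtype.ext h0
    rw [hg0, addOrderOf_zero] at hg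
    norm_num at hg
  have hcases : Nat.card T = 1 ∨ Nat.card T = 3 ∨ Nat.card T = 5 := by omega
  rcases hcases with h | h | h
  · exact Or.inl (equiv_zmod_one h)
  · exact Or.inr (Or.inl (equiv_zmod_prime (by norm_num) h))
  · exact Or.inr (Or.inr (equiv_zmod_prime (by norm_num) h))
end

section
/- Let H be the subgroup of GL_2(Z/4Z) of matrices of the form [[a,b],[0,a]] with a ∈ (Z/4Z)^× and b ∈ Z/4Z. If a subgroup K of H contains [[1,1],[0,1]] or [[-1,1],[0,-1]] and the fixed points of K acting on (Z/4Z)² form a group isomorphic to Z/2Z (not containing an element of order 4), then K = H. In particular then #K = 8. -/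
/-- The subgroup `H` of `GL₂(ℤ/4ℤ)` of matrices `[[a, b], [0, a]]` with `a ∈ (ℤ/4ℤ)ˣ` and
`b ∈ ℤ/4ℤ`, as a set of `GL₂(ℤ/4ℤ)`. -/
def Hset4 : Set (GL (Fin 2) (ZMod 4)) :=
  {M | M.1 1 0 = 0 ∧ M.1 1 1 = M.1 0 0}

namespace Stmt12Aux

lemma mat_eq (A : Matrix (Fin 2) (Fin 2) (ZMod 4)) {a b c d : ZMod 4}
    (h1 : A 0 0 = a) (h2 : A 0 1 = b) (h3 : A 1 0 = c) (h4 : A 1 1 = d) :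
    A = !![a,b;c,d] := by
  have := Matrix.eta_fin_two A
  rw [h1,h2,h3,h4] at this
  exact this

lemma keyA (M : GL (Fin 2) (ZMod 4)) (h10 : M.1 1 0 = 0) (h11 : M.1 1 1 = M.1 0 0) :
    M.1 0 0 = 1 ∨ M.1 0 0 = 3 := by
  have hdet : M.1.det * (M.inv).det = 1 := by
    rw [← Matrix.det_mul, M.val_inv, Matrix.det_one]
  rw [Matrix.det_fin_two, h10, h11] at hdet
  have h : ∀ a b c : ZMod 4, (a * a - b * 0) * c = 1 → a = 1 ∨ a = 3 := by decide
  exact h _ _ _ hdet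

lemma ord4 (v : Fin 2 → ZMod 4) (h2 : (2:ℕ) • v ≠ 0) (h4 : (4:ℕ) • v = 0) :
    addOrderOf v = 4 := by
  have := addOrderOf_eq_prime_pow (p := 2) (n := 1) (x := v) (by simpa using h2)
    (by simpa using h4)
  simpa using this

lemma mulVec2 (M : Matrix (Fin 2) (Fin 2) (ZMod 4)) (x y : ZMod 4) :
    M.mulVec ![x,y] = ![M 0 0 * x + M 0 1 * y, M 1 0 * x + M 1 1 * y] := by
  funext i
  fin_cases i <;> simp [Matrix.mulVec, dotProduct, Fin.sum_univ_two]

lemma pow_T (k : ℕ) :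
    (!![1,1;0,1] : Matrix (Fin 2) (Fin 2) (ZMod 4)) ^ k = !![1,(k:ZMod 4);0,1] := by
  induction k with
  | zero => simp [Matrix.one_fin_two]
  | succ n ih => rw [pow_succ, ih, Matrix.mul_fin_two]; push_cast; norm_num [add_comm]

lemma gen (K : Subgroup (GL (Fin 2) (ZMod 4))) (t w : GL (Fin 2) (ZMod 4))
    (htK : t ∈ K) (hwK : w ∈ K) (ht : t.1 = !![1,1;0,1])
    (hw : ∃ c, w.1 = !![3,c;0,3]) : Hset4 ⊆ (K : Set _) := by
  obtain ⟨c, hw⟩ := hw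
  intro N hN
  obtain ⟨hN10, hN11⟩ := hN
  have h4 : (4 : ZMod 4) = 0 := by decide
  obtain ⟨b, hb⟩ : ∃ b, N.1 0 1 = b := ⟨_, rfl⟩
  rcases keyA N hN10 hN11 with h00 | h00
  · have hNe : N.1 = !![1, b; 0, 1] := mat_eq _ h00 hb hN10 (by rw [hN11, h00])
    have hEq : N = t ^ b.val := by
      apply Units.ext
      rw [Units.val_pow_eq_pow_val, ht, pow_T, hNe, ZMod.natCast_val, ZMod.cast_id]
    rw [hEq]; exact pow_mem htK _
  · have hNe : N.1 = !![3, b; 0, 3] := mat_eq _ h00 hb hN10 (by rw [hN11, h00])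
    have hEq : N = w * t ^ ((3 * (b - c)).val) := by
      apply Units.ext
      rw [Units.val_mul, Units.val_pow_eq_pow_val, ht, hw, pow_T, hNe, Matrix.mul_fin_two,
        ZMod.natCast_val, ZMod.cast_id,
        show (3:ZMod 4) * (3 * (b - c)) + c * 1 = b from by linear_combination (2*b - 2*c) * h4]
      norm_num
    rw [hEq]; exact K.mul_mem hwK (pow_mem htK _)

def aOf (s : Bool) : ZMod 4 := if s then 1 else 3

def mk4 (s : Bool) (b : ZMod 4) : GL (Fin 2) (ZMod 4) where
  val := !![aOf s, b; 0, aOf s]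
  inv := !![aOf s, -b; 0, aOf s]
  val_inv := by
    rw [Matrix.mul_fin_two, Matrix.one_fin_two]
    cases s <;> simp [aOf]
    all_goals (revert b; decide)
  inv_val := by
    rw [Matrix.mul_fin_two, Matrix.one_fin_two]
    cases s <;> simp [aOf]
    all_goals (revert b; decide)

def HEquiv : (Bool × ZMod 4) ≃ Hset4 where
  toFun p := ⟨mk4 p.1 p.2, by constructor <;> simp [mk4]⟩
  invFun M := (decide (M.1.1 0 0 = 1), M.1.1 0 1)
  left_inv p := by
    cases p with
    | mk s b => cases s <;> simp [mk4, aOf] <;> decide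
  right_inv M := by
    obtain ⟨M, hM10, hM11⟩ := M
    apply Subtype.ext
    apply Units.ext
    show (mk4 _ _).1 = M.1
    rcases keyA M hM10 hM11 with h00 | h00
    · rw [show (mk4 (decide (M.1 0 0 = 1)) (M.1 0 1)).1
          = !![aOf (decide (M.1 0 0 = 1)), M.1 0 1; 0, aOf (decide (M.1 0 0 = 1))] from rfl,
        h00, show aOf (decide ((1:ZMod 4) = 1)) = 1 from by decide]
      exact (mat_eq _ h00 rfl hM10 (hM11.trans h00)).symm
    · rw [show (mk4 (decide (M.1 0 0 = 1)) (M.1 0 1)).1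
          = !![aOf (decide (M.1 0 0 = 1)), M.1 0 1; 0, aOf (decide (M.1 0 0 = 1))] from rfl,
        h00, show aOf (decide ((3:ZMod 4) = 1)) = 3 from by decide]
      exact (mat_eq _ h00 rfl hM10 (hM11.trans h00)).symm

end Stmt12Aux

open Stmt12Aux
/-- Let `H ≤ GL₂(ℤ/4ℤ)` consist of the matrices `[[a, b], [0, a]]` with
`a ∈ (ℤ/4ℤ)ˣ`, `b ∈ ℤ/4ℤ`.  If a subgroup `K` of `H` contains `[[1,1],[0,1]]` or
`[[-1,1],[0,-1]]`, and the fixed points of `K` acting on `(ℤ/4ℤ)²` form a group isomorphic to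
`ℤ/2ℤ` (in particular containing no element of order `4`), then `K = H`; in particular
`#K = 8`. -/
theorem stmt_12 (K : Subgroup (GL (Fin 2) (ZMod 4))) (hKH : (K : Set _) ⊆ Hset4)
    (hmem : ∃ M ∈ K, M.1 1 0 = 0 ∧ M.1 0 1 = 1 ∧
      ((M.1 0 0 = 1 ∧ M.1 1 1 = 1) ∨ (M.1 0 0 = -1 ∧ M.1 1 1 = -1)))
    (hfix : Nat.card {v : Fin 2 → ZMod 4 | ∀ M ∈ K, M.1.mulVec v = v} = 2 ∧
      ∀ v : Fin 2 → ZMod 4, (∀ M ∈ K, M.1.mulVec v = v) → addOrderOf v ≠ 4) :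
    (K : Set _) = Hset4 ∧ Nat.card K = 8 := by
  obtain ⟨M0, hM0K, hM010, hM001, hdiag⟩ := hmem
  have main : ∃ t ∈ K, ∃ w ∈ K, (t : GL (Fin 2) (ZMod 4)).1 = !![1,1;0,1] ∧
      ∃ c, (w : GL (Fin 2) (ZMod 4)).1 = !![3,c;0,3] := by
    rcases hdiag with ⟨h00, h11⟩ | ⟨h00, h11⟩
    · -- M0 = [[1,1],[0,1]]
      have hM0 : M0.1 = !![1,1;0,1] := mat_eq _ h00 hM001 hM010 h11
      have hex : ∃ m ∈ K, ¬ m.1.mulVec ![1,0] = ![1,0] := by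
        by_contra h
        push_neg at h
        exact hfix.2 ![1,0] h (ord4 _ (by decide) (by decide))
      obtain ⟨m, hmK, hm⟩ := hex
      obtain ⟨hm10, hm11⟩ := hKH hmK
      rcases keyA m hm10 hm11 with h1 | h3
      · exact absurd (by rw [mulVec2, h1, hm10]; norm_num) hm
      · exact ⟨M0, hM0K, m, hmK, hM0, m.1 0 1,
          mat_eq _ h3 rfl hm10 (hm11.trans h3)⟩
    · -- M0 = [[-1,1],[0,-1]]
      have hM0 : M0.1 = !![3,1;0,3] :=
        mat_eq _ (h00.trans (by decide)) hM001 hM010 (h11.trans (by decide))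
      have hex : ∃ m ∈ K, ¬ m.1.mulVec ![1,2] = ![1,2] := by
        by_contra h
        push_neg at h
        exact hfix.2 ![1,2] h (ord4 _ (by decide) (by decide))
      obtain ⟨m, hmK, hm⟩ := hex
      obtain ⟨hm10, hm11⟩ := hKH hmK
      have hb4 : m.1 0 1 = 0 ∨ m.1 0 1 = 1 ∨ m.1 0 1 = 2 ∨ m.1 0 1 = 3 := by
        have : ∀ x : ZMod 4, x = 0 ∨ x = 1 ∨ x = 2 ∨ x = 3 := by decide
        exact this _
      have hext : ∃ t ∈ K, (t : GL (Fin 2) (ZMod 4)).1 = !![1,1;0,1] := by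
        rcases keyA m hm10 hm11 with ha | ha <;>
          rcases hb4 with hb | hb | hb | hb <;>
          have hme : m.1 = _ := mat_eq _ ha hb hm10 (hm11.trans ha)
        · exact absurd (by rw [hme]; decide) hm
        · exact ⟨m, hmK, hme⟩
        · exact absurd (by rw [hme]; decide) hm
        · exact ⟨m * m * m, K.mul_mem (K.mul_mem hmK hmK) hmK,
            by simp only [Units.val_mul, hme]; decide⟩
        · exact ⟨m * M0 * (m * M0) * (m * M0),
            K.mul_mem (K.mul_mem (K.mul_mem hmK hM0K) (K.mul_mem hmK hM0K)) (K.mul_mem hmK hM0K),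
            by simp only [Units.val_mul, hme, hM0]; decide⟩
        · exact absurd (by rw [hme]; decide) hm
        · exact ⟨m * M0, K.mul_mem hmK hM0K, by simp only [Units.val_mul, hme, hM0]; decide⟩
        · exact absurd (by rw [hme]; decide) hm
      obtain ⟨t, htK, ht⟩ := hext
      exact ⟨t, htK, M0, hM0K, ht, 1, hM0⟩
  obtain ⟨t, htK, w, hwK, ht, hw⟩ := main
  have hset : (K : Set _) = Hset4 := Set.Subset.antisymm hKH (gen K t w htK hwK ht hw)
  refine ⟨hset, ?_⟩
  have e1 : Nat.card K = Nat.card Hset4 := Nat.card_congr (Equiv.setCongr hset)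
  rw [e1, Nat.card_congr HEquiv.symm, Nat.card_eq_fintype_card]
  decide
end
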